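/- Every countable model $\mathcal{M} \models \mathsf{PA}$ has $2^{\aleph_0}$ distinct strongly CP-generic subsets. -/

import Mathlib

open FirstOrder Language Set

open FirstOrder Language Set

/-- The first-order language of arithmetic: constants 0, 1; binary functions + , * ;
binary relation < . -/
abbrev Larith : FirstOrder.Language :=
  ⟨fun n => match n with
    | 0 => Fin 2
    | 2 => Fin 2
    | _ => Empty,
   fun n => match n with
    | 2 => Unit
    | _ => Empty⟩

/-- The data of an interpretation of the language of arithmetic. -/
class ArithData (M : Type*) extends Zero M, One M, Add M, Mul M, LT M

instance arithStructure (M : Type*) [ArithData M] : Larith.Structure M where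
  funMap {n} f x :=
    match n, f with
    | 0, c => if @Eq (Fin 2) c 0 then (0 : M) else 1
    | 2, f => if @Eq (Fin 2) f 0 then x 0 + x 1 else x 0 * x 1
  RelMap {n} r x :=
    match n, r with
    | 2, _ => x 0 < x 1

/-- The canonical embedding of the standard natural numbers. Its range is the standard cut ω. -/
def std (M : Type*) [ArithData M] : ℕ → M
  | 0 => 0
  | n + 1 => std M n + 1

/-- A semantic rendering of "`M ⊨ PA`": the basic axioms of a discretely ordered commutative
semiring together with the induction scheme for all parametrically definable sets. -/
def IsPAModel (M : Type*) [ArithData M] : Prop :=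
  (∀ x y z : M, x + (y + z) = (x + y) + z) ∧
  (∀ x y : M, x + y = y + x) ∧
  (∀ x : M, x + 0 = x) ∧
  (∀ x y z : M, x * (y * z) = (x * y) * z) ∧
  (∀ x y : M, x * y = y * x) ∧
  (∀ x : M, x * 1 = x) ∧
  (∀ x : M, x * 0 = 0) ∧
  (∀ x y z : M, x * (y + z) = x * y + x * z) ∧
  (∀ x y z : M, x < y → y < z → x < z) ∧
  (∀ x : M, ¬ x < x) ∧
  (∀ x y : M, x < y ∨ x = y ∨ y < x) ∧
  (∀ x y z : M, x < y → x + z < y + z) ∧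
  (∀ x y z : M, x + z = y + z → x = y) ∧
  ((0 : M) < 1) ∧
  (∀ x : M, x = 0 ∨ 0 < x) ∧
  (∀ x y : M, x < y → (x + 1 = y ∨ x + 1 < y)) ∧
  (∀ x y : M, x < y → ∃ z : M, x + z = y) ∧
  (∀ S : Set (Fin 1 → M), Set.Definable (Set.univ : Set M) Larith S →
    (fun _ => (0 : M)) ∈ S →
    (∀ x : M, (fun _ => x) ∈ S → (fun _ => x + 1) ∈ S) →
    ∀ x : M, (fun _ => x) ∈ S)

/-- The Skolem closure (= definable closure) of a set of parameters in a model of PA: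
the set of elements definable (as singletons) from parameters in `A`. -/
def Scl (M : Type*) [ArithData M] (A : Set M) : Set M :=
  { x | Set.Definable A Larith ({ f | f 0 = x } : Set (Fin 1 → M)) }

/-- `X` is CP-generic (Chatzidakis–Pillay generic): for every set `D ⊆ Mⁿ` definable using only
the parameter `a` and every `I ⊆ {1,…,n}`, if `D` contains a tuple of pairwise distinct elements
all lying outside `Scl(a)`, then `D` contains a tuple whose entries lie in `X` exactly at the
positions in `I`. -/
def CPGeneric (M : Type*) [ArithData M] (X : Set M) : Prop :=
  ∀ (n : ℕ) (a : M) (D : Set (Fin n → M)), Set.Definable ({a} : Set M) Larith D →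
    ∀ I : Set (Fin n),
      (∃ b : Fin n → M, b ∈ D ∧ Function.Injective b ∧ ∀ i, b i ∉ Scl M {a}) →
      ∃ b : Fin n → M, b ∈ D ∧ ∀ i, (b i ∈ X ↔ i ∈ I)

/-- `X` is strongly CP-generic: for every definable `D ⊆ Mⁿ` (any parameters) containing an
infinite family of injective tuples with pairwise disjoint coordinate sets, and every
`I ⊆ {1,…,n}`, `D` contains a tuple whose entries lie in `X` exactly at positions in `I`. -/
def StrongCPGeneric (M : Type*) [ArithData M] (X : Set M) : Prop :=
  ∀ (n : ℕ) (D : Set (Fin n → M)), Set.Definable (Set.univ : Set M) Larith D →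
    ∀ I : Set (Fin n),
      (∃ B : Set (Fin n → M), B ⊆ D ∧ B.Infinite ∧ (∀ b ∈ B, Function.Injective b) ∧
        (∀ b ∈ B, ∀ c ∈ B, b ≠ c → ∀ i j, b i ≠ c j)) →
      ∃ b : Fin n → M, b ∈ D ∧ ∀ i, (b i ∈ X ↔ i ∈ I)

-- ############ auxiliary development ############
namespace CMSG

variable {M : Type*} [ArithData M]

lemma lt_succ_self (hPA : IsPAModel M) (x : M) : x < x + 1 := by
  obtain ⟨ha, hc, hz, -, -, -, -, -, -, -, -, hmono, -, h01, -⟩ := hPA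
  have := hmono 0 1 x h01
  rwa [hc 0 x, hc 1 x, hz x] at this

lemma std_strict (hPA : IsPAModel M) {m n : ℕ} (h : m < n) : std M m < std M n := by
  have htr := hPA.2.2.2.2.2.2.2.2.1
  induction n with
  | zero => omega
  | succ n ih =>
    rcases Nat.lt_succ_iff_lt_or_eq.mp h with h' | h'
    · exact htr _ _ _ (ih h') (lt_succ_self hPA (std M n))
    · subst h'; exact lt_succ_self hPA (std M m)

lemma std_injective (hPA : IsPAModel M) : Function.Injective (std M) := by
  have hirr := hPA.2.2.2.2.2.2.2.2.2.1
  intro m n h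
  by_contra hne
  rcases Nat.lt_or_ge m n with h' | h'
  · exact hirr _ (h ▸ std_strict hPA h')
  · exact hirr _ (h ▸ std_strict hPA (by omega : n < m))

lemma infinite_M (hPA : IsPAModel M) : Infinite M :=
  Infinite.of_injective (std M) (std_injective hPA)


/-- A finite forcing condition. -/
structure Cond (M : Type*) where
  P : Set M
  N : Set M
  finP : P.Finite
  finN : N.Finite
  disj : ∀ x ∈ P, x ∉ N

/-- Condition extension. -/
def Cond.le (c d : Cond M) : Prop := c.P ⊆ d.P ∧ c.N ⊆ d.N

lemma Cond.le_refl (c : Cond M) : c.le c := ⟨subset_rfl, subset_rfl⟩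

lemma Cond.le_trans {c d e : Cond M} (h : c.le d) (h' : d.le e) : c.le e :=
  ⟨h.1.trans h'.1, h.2.trans h'.2⟩

/-- A (strong) genericity requirement. -/
def Req (M : Type*) [ArithData M] : Type _ :=
  Σ n : ℕ, {D : Set (Fin n → M) // Set.Definable (Set.univ : Set M) Larith D} × Set (Fin n)

/-- The witness hypothesis of strong CP-genericity. -/
def Wit {n : ℕ} (D : Set (Fin n → M)) : Prop :=
  ∃ B : Set (Fin n → M), B ⊆ D ∧ B.Infinite ∧ (∀ b ∈ B, Function.Injective b) ∧
    (∀ b ∈ B, ∀ c ∈ B, b ≠ c → ∀ i j, b i ≠ c j)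

/-- The specification of meeting a requirement. -/
def MeetSpec (c : Cond M) (r : Req M) (d : Cond M) : Prop :=
  c.le d ∧ (Wit r.2.1.1 →
    ∃ b, b ∈ r.2.1.1 ∧ ∀ i, (i ∈ r.2.2 → b i ∈ d.P) ∧ (i ∉ r.2.2 → b i ∈ d.N))

lemma fresh_tuple {n : ℕ} {D : Set (Fin n → M)} (hW : Wit D) (c : Cond M) :
    ∃ b, b ∈ D ∧ Function.Injective b ∧ ∀ i, b i ∉ c.P ∪ c.N := by
  obtain ⟨B, hBD, hBinf, hinj, hdisj⟩ := hW
  set Bad : Set (Fin n → M) := {b ∈ B | ∃ i, b i ∈ c.P ∪ c.N} with hBad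
  have hfin : Bad.Finite := by
    haveI : Finite ↥(c.P ∪ c.N) := (c.finP.union c.finN).to_subtype
    rw [← Set.finite_coe_iff]
    refine Finite.of_injective (fun b => (⟨b.1 (Classical.choose b.2.2),
      Classical.choose_spec b.2.2⟩ : ↥(c.P ∪ c.N))) ?_
    rintro ⟨b, hbB, hb⟩ ⟨b', hb'B, hb'⟩ h
    simp only [Subtype.mk.injEq] at h ⊢
    by_contra hne
    exact hdisj b hbB b' hb'B hne _ _ h
  obtain ⟨b, hbB, hbn⟩ := (hBinf.diff hfin).nonempty
  refine ⟨b, hBD hbB, hinj b hbB, fun i hi => hbn ⟨hbB, i, hi⟩⟩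

lemma meetSpec_exists (c : Cond M) (r : Req M) : ∃ d, MeetSpec c r d := by
  by_cases hW : Wit r.2.1.1
  · obtain ⟨b, hbD, hbinj, hbfresh⟩ := fresh_tuple hW c
    refine ⟨⟨c.P ∪ b '' r.2.2, c.N ∪ b '' (r.2.2)ᶜ,
      c.finP.union ((Set.toFinite _).image b), c.finN.union ((Set.toFinite _).image b), ?_⟩,
      ⟨⟨subset_union_left, subset_union_left⟩, fun _ => ⟨b, hbD, fun i => ⟨fun hi =>
        Set.mem_union_right _ (Set.mem_image_of_mem b hi), fun hi =>
        Set.mem_union_right _ (Set.mem_image_of_mem b hi)⟩⟩⟩⟩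
    rintro x (hx | ⟨i, hiI, rfl⟩) hx'
    · rcases hx' with hx' | ⟨j, hjI, hj⟩
      · exact c.disj x hx hx'
      · exact hbfresh j (Set.mem_union_left _ (hj ▸ hx))
    · rcases hx' with hx' | ⟨j, hjI, hj⟩
      · exact hbfresh i (Set.mem_union_right _ hx')
      · exact hjI (hbinj hj ▸ hiI)
  · exact ⟨c, c.le_refl, fun h => absurd h hW⟩

noncomputable def meet (c : Cond M) (r : Req M) : Cond M := (meetSpec_exists c r).choose

lemma meet_spec (c : Cond M) (r : Req M) : MeetSpec c r (meet c r) :=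
  (meetSpec_exists c r).choose_spec

lemma fresh_exists (hPA : IsPAModel M) (c : Cond M) : ∃ m : M, m ∉ c.P ∪ c.N := by
  haveI := infinite_M hPA
  obtain ⟨m, hm⟩ := ((c.finP.union c.finN).infinite_compl).nonempty
  exact ⟨m, hm⟩

noncomputable def fresh (hPA : IsPAModel M) (c : Cond M) : M := (fresh_exists hPA c).choose

lemma fresh_spec (hPA : IsPAModel M) (c : Cond M) :
    fresh hPA c ∉ c.P ∧ fresh hPA c ∉ c.N := by
  have := (fresh_exists hPA c).choose_spec
  exact ⟨fun h => this (Or.inl h), fun h => this (Or.inr h)⟩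

noncomputable def push (hPA : IsPAModel M) (c : Cond M) (v : Bool) : Cond M :=
  if v then ⟨insert (fresh hPA c) c.P, c.N, c.finP.insert _, c.finN, by
      rintro x (rfl | hx)
      · exact (fresh_spec hPA c).2
      · exact c.disj x hx⟩
  else ⟨c.P, insert (fresh hPA c) c.N, c.finP, c.finN.insert _, by
      rintro x hx (rfl | hx')
      · exact (fresh_spec hPA c).1 hx
      · exact c.disj x hx hx'⟩

lemma push_le (hPA : IsPAModel M) (c : Cond M) (v : Bool) : c.le (push hPA c v) := by
  unfold push; split <;> exact ⟨by intro x hx; first | exact Set.mem_insert_of_mem _ hx | exact hx,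
    by intro x hx; first | exact Set.mem_insert_of_mem _ hx | exact hx⟩

noncomputable def chain (hPA : IsPAModel M) (e : ℕ → Req M) (s : ℕ → Bool) : ℕ → Cond M
  | 0 => ⟨∅, ∅, Set.finite_empty, Set.finite_empty, by simp⟩
  | k + 1 => push hPA (meet (chain hPA e s k) (e k)) (s k)

lemma chain_le_succ (hPA : IsPAModel M) (e : ℕ → Req M) (s : ℕ → Bool) (k : ℕ) :
    (chain hPA e s k).le (chain hPA e s (k + 1)) :=
  Cond.le_trans (meet_spec _ (e k)).1 (push_le hPA _ (s k))

lemma chain_mono (hPA : IsPAModel M) (e : ℕ → Req M) (s : ℕ → Bool) {j k : ℕ} (h : j ≤ k) :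
    (chain hPA e s j).le (chain hPA e s k) := by
  induction k with
  | zero => rw [Nat.le_zero.mp h]; exact Cond.le_refl _
  | succ k ih =>
    rcases Nat.le_succ_iff.mp h with h' | h'
    · exact Cond.le_trans (ih h') (chain_le_succ hPA e s k)
    · rw [h']; exact Cond.le_refl _

/-- The generic set built from the chain. -/
def limit (hPA : IsPAModel M) (e : ℕ → Req M) (s : ℕ → Bool) : Set M :=
  ⋃ k, (chain hPA e s k).P

lemma mem_limit_of_P {hPA : IsPAModel M} {e : ℕ → Req M} {s : ℕ → Bool} {k : ℕ} {x : M}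
    (hx : x ∈ (chain hPA e s k).P) : x ∈ limit hPA e s :=
  Set.mem_iUnion.mpr ⟨k, hx⟩

lemma not_mem_limit_of_N {hPA : IsPAModel M} {e : ℕ → Req M} {s : ℕ → Bool} {k : ℕ} {x : M}
    (hx : x ∈ (chain hPA e s k).N) : x ∉ limit hPA e s := by
  intro hmem
  obtain ⟨j, hj⟩ := Set.mem_iUnion.mp hmem
  rcases Nat.le_total j k with h | h
  · exact (chain hPA e s k).disj x ((chain_mono hPA e s h).1 hj) hx
  · exact (chain hPA e s j).disj x hj ((chain_mono hPA e s h).2 hx)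

lemma chain_congr (hPA : IsPAModel M) (e : ℕ → Req M) {s t : ℕ → Bool} (k : ℕ)
    (h : ∀ j < k, s j = t j) : chain hPA e s k = chain hPA e t k := by
  induction k with
  | zero => rfl
  | succ k ih =>
    show push _ _ _ = push _ _ _
    rw [ih (fun j hj => h j (Nat.lt_succ_of_lt hj)), h k (Nat.lt_succ_self k)]

lemma limit_injective (hPA : IsPAModel M) (e : ℕ → Req M) :
    Function.Injective (limit hPA e) := by
  have key : ∀ s t : ℕ → Bool, ∀ k, (∀ j < k, s j = t j) → s k = true → t k = false →
      limit hPA e s ≠ limit hPA e t := by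
    intro s t k hagree hs ht heq
    have hc : chain hPA e s k = chain hPA e t k := chain_congr hPA e k hagree
    set c := meet (chain hPA e s k) (e k) with hcdef
    have hm1 : fresh hPA c ∈ (chain hPA e s (k + 1)).P := by
      show fresh hPA c ∈ (push hPA (meet (chain hPA e s k) (e k)) (s k)).P
      rw [hs]; exact Set.mem_insert _ _
    have hm2 : fresh hPA c ∈ (chain hPA e t (k + 1)).N := by
      show fresh hPA c ∈ (push hPA (meet (chain hPA e t k) (e k)) (t k)).N
      rw [ht, ← hc]; exact Set.mem_insert _ _
    exact not_mem_limit_of_N hm2 (heq ▸ mem_limit_of_P hm1)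
  intro s t heq
  by_contra hne
  have : ∃ k, s k ≠ t k := by
    by_contra h; push_neg at h; exact hne (funext h)
  set k := Nat.find this with hk
  have hdiff : s k ≠ t k := Nat.find_spec this
  have hagree : ∀ j < k, s j = t j := fun j hj => by
    by_contra h; exact Nat.find_min this hj h
  rcases Bool.eq_false_or_eq_true (s k) with hs | hs
  · rcases Bool.eq_false_or_eq_true (t k) with ht | ht
    · exact hdiff (hs.trans ht.symm)
    · exact key s t k hagree hs ht heq
  · rcases Bool.eq_false_or_eq_true (t k) with ht | ht
    · exact key t s k (fun j hj => (hagree j hj).symm) ht hs heq.symm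
    · exact hdiff (hs.trans ht.symm)

lemma limit_generic (hPA : IsPAModel M) (e : ℕ → Req M) (he : Function.Surjective e)
    (s : ℕ → Bool) : StrongCPGeneric M (limit hPA e s) := by
  intro n D hD I hB
  obtain ⟨k, hk⟩ := he ⟨n, (⟨D, hD⟩, I)⟩
  have hspec := (meet_spec (chain hPA e s k) (e k)).2
  have hle : (meet (chain hPA e s k) (e k)).le (chain hPA e s (k + 1)) :=
    push_le hPA _ (s k)
  rw [hk] at hspec hle
  obtain ⟨b, hbD, hb⟩ := hspec hB
  refine ⟨b, hbD, fun i => ⟨fun hbi => ?_, fun hiI => ?_⟩⟩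
  · by_contra hiI
    exact not_mem_limit_of_N (hle.2 ((hb i).2 hiI)) hbi
  · exact mem_limit_of_P (hle.1 ((hb i).1 hiI))

lemma countable_formula (M : Type*) [Countable M] (n : ℕ) :
    Countable ((Larith[[(Set.univ : Set M)]]).Formula (Fin n)) := by
  set L' := Larith[[(Set.univ : Set M)]]
  haveI hF : ∀ l, Countable (L'.Functions l) := by
    intro l
    match l with
    | 0 => exact inferInstanceAs (Countable (Fin 2 ⊕ ↥(Set.univ : Set M)))
    | 1 => exact inferInstanceAs (Countable (Empty ⊕ PEmpty))
    | 2 => exact inferInstanceAs (Countable (Fin 2 ⊕ PEmpty))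
    | (m+3) => exact inferInstanceAs (Countable (Empty ⊕ PEmpty))
  haveI hR : ∀ l, Countable (L'.Relations l) := by
    intro l
    match l with
    | 2 => exact inferInstanceAs (Countable (Unit ⊕ Empty))
    | 0 => exact inferInstanceAs (Countable (Empty ⊕ Empty))
    | 1 => exact inferInstanceAs (Countable (Empty ⊕ Empty))
    | (m+3) => exact inferInstanceAs (Countable (Empty ⊕ Empty))
  haveI : Countable (Σ l, L'.Functions l) := inferInstance
  haveI : Countable (Σ l, L'.Relations l) := inferInstance
  haveI : Countable (Σ m, L'.BoundedFormula (Fin n) m) :=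
    (BoundedFormula.listEncode_sigma_injective).countable
  exact Function.Injective.countable
    (f := fun φ : L'.Formula (Fin n) => (⟨0, φ⟩ : Σ m, L'.BoundedFormula (Fin n) m))
    (fun a b h => by injection h)

instance countable_req (M : Type*) [ArithData M] [Countable M] : Countable (Req M) := by
  haveI : ∀ n : ℕ, Countable
      ({D : Set (Fin n → M) // Set.Definable (Set.univ : Set M) Larith D} × Set (Fin n)) := by
    intro n
    haveI := countable_formula M n
    haveI : Countable {D : Set (Fin n → M) // Set.Definable (Set.univ : Set M) Larith D} := by
      have hsurj : Function.Surjective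
          (fun φ : (Larith[[(Set.univ : Set M)]]).Formula (Fin n) =>
            (⟨setOf φ.Realize, ⟨φ, rfl⟩⟩ :
              {D : Set (Fin n → M) // Set.Definable (Set.univ : Set M) Larith D})) := by
        rintro ⟨D, hD⟩
        obtain ⟨φ, rfl⟩ := hD
        exact ⟨φ, rfl⟩
      exact hsurj.countable
    infer_instance
  exact inferInstanceAs (Countable (Σ n : ℕ, _))

instance nonempty_req (M : Type*) [ArithData M] : Nonempty (Req M) :=
  ⟨⟨0, (⟨Set.univ, Set.definable_univ⟩, (∅ : Set (Fin 0)))⟩⟩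

end CMSG

/-- Every countable model of PA has `2^ℵ₀` distinct strongly CP-generic subsets. -/
theorem continuum_many_strongCP (M : Type*) [ArithData M] [Countable M] (hPA : IsPAModel M) :
    Cardinal.mk { X : Set M // StrongCPGeneric M X } = 2 ^ Cardinal.aleph0 := by
  classical
  apply le_antisymm
  · calc Cardinal.mk { X : Set M // StrongCPGeneric M X }
        ≤ Cardinal.mk (Set M) := Cardinal.mk_subtype_le _
      _ = 2 ^ Cardinal.mk M := Cardinal.mk_set
      _ ≤ 2 ^ Cardinal.aleph0 :=
        Cardinal.power_le_power_left two_ne_zero Cardinal.mk_le_aleph0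
  · obtain ⟨e, he⟩ := exists_surjective_nat (CMSG.Req M)
    have hinj : Function.Injective (fun s : ℕ → Bool =>
        (⟨CMSG.limit hPA e s, CMSG.limit_generic hPA e he s⟩ :
          { X : Set M // StrongCPGeneric M X })) := by
      intro s t h
      exact CMSG.limit_injective hPA e (congrArg Subtype.val h)
    have h0 : Cardinal.mk (ℕ → Bool) = 2 ^ Cardinal.aleph0 := by
      rw [← Cardinal.mk_nat, ← Cardinal.mk_bool, Cardinal.power_def]
    have h2 := Cardinal.lift_mk_le'.mpr ⟨⟨_, hinj⟩⟩
    simp only [h0, Cardinal.lift_power, Cardinal.lift_aleph0, Cardinal.lift_ofNat,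
      Cardinal.lift_id, Cardinal.lift_id'] at h2
    exact h2
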